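/- arXiv:1201.3990 — 2 statements merged into one kernel-verified Lean document; each statement's English description precedes it below -/
import Mathlib

section
/- For quasiexponentials f_i(u) = e^{q_i u}(u + c_i), i = 1,...,n, with q_1,...,q_n pairwise distinct complex numbers and c_i arbitrary complex numbers, the Wronskian satisfies Wr(f_1,...,f_n) = e^{(q_1+···+q_n)u} · ∏_{i<j}(q_j - q_i) · g(u) for some monic polynomial g of degree n. -/
/-!
Row `i` of the Wronskian matrix is `e^{q_i u}` times a row that is affine in `u`, whose
`u`-coefficient is the Vandermonde row `(q_i ^ j)_j`. Pulling out the exponentials leaves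
`det (u • V + B)`, a polynomial in `u` of degree at most `n` whose coefficient of `u ^ n` is
`det V = ∏_{i<j} (q_j - q_i)`, nonzero since the `q_i` are distinct; `g` is this polynomial
divided by `det V`.
-/

open Finset Polynomial Matrix

theorem iteratedDeriv_exp_mul_mul_add (a b : ℂ) (j : ℕ) (u : ℂ) :
    iteratedDeriv j (fun x => Complex.exp (a * x) * (x + b)) u
      = Complex.exp (a * u) * (a ^ j * (u + b) + j * a ^ (j - 1)) := by
  induction j generalizing u with
  | zero => simp
  | succ j ih =>
    have hexp : HasDerivAt (fun x => Complex.exp (a * x)) (Complex.exp (a * u) * a) u := by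
      simpa using ((hasDerivAt_id u).const_mul a).cexp
    have hlin : HasDerivAt (fun x => a ^ j * (x + b) + j * a ^ (j - 1)) (a ^ j) u := by
      simpa using
        (((hasDerivAt_id u).add_const b).const_mul (a ^ j)).add_const ((j : ℂ) * a ^ (j - 1))
    have hpow : (j : ℂ) * (a * a ^ (j - 1)) = j * a ^ j := by
      cases j <;> simp [pow_succ']
    have hprod : HasDerivAt (fun x => Complex.exp (a * x) * (a ^ j * (x + b) + j * a ^ (j - 1)))
        (Complex.exp (a * u) * a * (a ^ j * (u + b) + j * a ^ (j - 1))
          + Complex.exp (a * u) * a ^ j) u :=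
      hexp.mul hlin
    rw [iteratedDeriv_succ, funext ih, hprod.deriv]
    push_cast
    linear_combination Complex.exp (a * u) * hpow

namespace Polynomial

variable {ι K : Type*} [Fintype ι] [DecidableEq ι] [Field K]

theorem natDegree_det_X_add_C_eq (A B : Matrix ι ι K) (hA : A.det ≠ 0) :
    natDegree (det ((X : K[X]) • A.map C + B.map C)) = Fintype.card ι :=
  (natDegree_det_X_add_C_le A B).antisymm
    (le_natDegree_of_ne_zero (by rwa [coeff_det_X_add_C_card]))

theorem leadingCoeff_det_X_add_C (A B : Matrix ι ι K) (hA : A.det ≠ 0) :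
    leadingCoeff (det ((X : K[X]) • A.map C + B.map C)) = A.det := by
  rw [leadingCoeff, natDegree_det_X_add_C_eq A B hA, coeff_det_X_add_C_card]

theorem eval_det_X_add_C {R : Type*} [CommRing R] (A B : Matrix ι ι R) (u : R) :
    eval u (det ((X : R[X]) • A.map C + B.map C)) = det (u • A + B) := by
  rw [← coe_evalRingHom, RingHom.map_det]
  congr 1
  ext i j
  simp only [RingHom.mapMatrix_apply, coe_evalRingHom, map_apply, Matrix.add_apply,
    Matrix.smul_apply, smul_eq_mul, eval_add, eval_mul, eval_C, eval_X]

end Polynomial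

theorem det_wronskian_exp_mul_mul_add {n : ℕ} (q c : Fin n → ℂ) (u : ℂ) :
    Matrix.det (Matrix.of fun i j : Fin n =>
        iteratedDeriv (j : ℕ) (fun x => Complex.exp (q i * x) * (x + c i)) u)
      = Complex.exp ((∑ i, q i) * u) * det (u • Matrix.vandermonde q
          + Matrix.of fun i j : Fin n => q i ^ (j : ℕ) * c i + j * q i ^ ((j : ℕ) - 1)) := by
  rw [sum_mul, Complex.exp_sum, ← Matrix.det_mul_column]
  congr 1
  ext i j
  simp only [of_apply, iteratedDeriv_exp_mul_mul_add, Matrix.add_apply, Matrix.smul_apply,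
    vandermonde_apply, smul_eq_mul]
  ring

/-- the Wronskian of the quasiexponentials `f i u = e^{q i · u}(u + c i)`,
with pairwise distinct `q i`, equals `e^{(∑ q) u} ∏_{i<j}(q j - q i) · g(u)` for some
monic polynomial `g` of degree `n`. -/
theorem wronskian_quasiexponentials (n : ℕ) (q c : Fin n → ℂ)
    (hq : Function.Injective q) :
    ∃ g : Polynomial ℂ, g.Monic ∧ g.natDegree = n ∧ ∀ u : ℂ,
      Matrix.det (Matrix.of fun i j : Fin n =>
          iteratedDeriv (j : ℕ) (fun x => Complex.exp (q i * x) * (x + c i)) u)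
        = Complex.exp ((∑ i, q i) * u)
          * (∏ i, ∏ j ∈ Finset.univ.filter (fun j => i < j), (q j - q i))
          * g.eval u := by
  set A := vandermonde q
  set B : Matrix (Fin n) (Fin n) ℂ :=
    of fun i j => q i ^ (j : ℕ) * c i + j * q i ^ ((j : ℕ) - 1)
  have hA : A.det ≠ 0 := det_vandermonde_ne_zero_iff.mpr hq
  have hA_eq : A.det = ∏ i, ∏ j ∈ univ.filter (fun j => i < j), (q j - q i) := by
    simp only [A, det_vandermonde, filter_lt_eq_Ioi]
  refine ⟨C A.det⁻¹ * det ((X : ℂ[X]) • A.map C + B.map C), ?_, ?_, fun u => ?_⟩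
  · exact monic_C_mul_of_mul_leadingCoeff_eq_one
      (by rw [leadingCoeff_det_X_add_C A B hA, inv_mul_cancel₀ hA])
  · rw [natDegree_C_mul (inv_ne_zero hA), natDegree_det_X_add_C_eq A B hA, Fintype.card_fin]
  · rw [det_wronskian_exp_mul_mul_add, eval_mul, eval_C, eval_det_X_add_C, ← hA_eq, mul_assoc,
      mul_inv_cancel_left₀ hA]
end

section
/- The Gaudin Hamiltonians H_1(z),...,H_n(z) on V^{⊗n}, where V = ℂ^N and z_1,...,z_n are distinct complex numbers, pairwise commute: [H_a(z), H_b(z)] = 0 for all a, b. -/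
open Finset

/-- The operator `e_{ij}^{(a)}` on `V^{⊗n}` with `V = ℂ^N`, realized on functions
`(Fin n → Fin N) → ℂ` (coordinates with respect to the standard tensor basis). -/
def Egl (n N : ℕ) (i j : Fin N) (a : Fin n) (v : (Fin n → Fin N) → ℂ) :
    (Fin n → Fin N) → ℂ :=
  fun m => if m a = i then v (Function.update m a j) else 0

/-- The Gaudin Hamiltonian `H_a(z) = ∑_{i,j} ∑_{b ≠ a} e_{ij}^{(a)} e_{ji}^{(b)} / (z_a - z_b)`
acting on `V^{⊗n}`, `V = ℂ^N`. -/
noncomputable def gaudinH (n N : ℕ) (z : Fin n → ℂ) (a : Fin n) (v : (Fin n → Fin N) → ℂ) :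
    (Fin n → Fin N) → ℂ :=
  fun m => ∑ b ∈ Finset.univ.erase a, ∑ i : Fin N, ∑ j : Fin N,
    Egl n N i j a (Egl n N j i b v) m / (z a - z b)

/-- Two swaps of elements of two triples sharing a common element. -/
lemma swap_comp_aux {α} [DecidableEq α] {x y w : α} (hxy : x ≠ y) (hyw : y ≠ w) (hxw : x ≠ w) :
    ⇑(Equiv.swap x y) ∘ ⇑(Equiv.swap y w) = ⇑(Equiv.swap y w) ∘ ⇑(Equiv.swap x w) := by
  funext t
  simp only [Function.comp_apply, Equiv.swap_apply_def]
  split_ifs <;> simp_all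

/-- Disjoint swaps commute. -/
lemma swap_comp_disjoint {α} [DecidableEq α] {a c b d : α}
    (h1 : a ≠ b) (h2 : a ≠ d) (h3 : c ≠ b) (h4 : c ≠ d) :
    ⇑(Equiv.swap a c) ∘ ⇑(Equiv.swap b d) = ⇑(Equiv.swap b d) ∘ ⇑(Equiv.swap a c) := by
  funext t
  simp only [Function.comp_apply, Equiv.swap_apply_def]
  split_ifs <;> simp_all

lemma update_update_eq_comp_swap {n N : ℕ} (m : Fin n → Fin N) {a b : Fin n} (hab : a ≠ b) :
    Function.update (Function.update m a (m b)) b (m a) = m ∘ ⇑(Equiv.swap a b) := by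
  funext c
  rcases eq_or_ne c b with rfl | hcb
  · simp [Equiv.swap_apply_right]
  · rcases eq_or_ne c a with rfl | hca
    · simp [Function.update_of_ne hab, Equiv.swap_apply_left]
    · simp [Function.update_of_ne hcb, Function.update_of_ne hca,
        Equiv.swap_apply_of_ne_of_ne hca hcb]

/-- The operator `∑_{i,j} e_{ij}^{(a)} e_{ji}^{(b)}` is the flip of tensor factors `a`, `b`. -/
lemma omega_apply (n N : ℕ) (a b : Fin n) (hba : b ≠ a) (v : (Fin n → Fin N) → ℂ)
    (m : Fin n → Fin N) :
    ∑ i : Fin N, ∑ j : Fin N, Egl n N i j a (Egl n N j i b v) m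
      = v (m ∘ ⇑(Equiv.swap a b)) := by
  simp only [Egl, Function.update_of_ne hba]
  rw [Finset.sum_eq_single (m a)]
  · simp only [eq_self_iff_true, if_true]
    rw [Finset.sum_eq_single (m b)]
    · rw [if_pos rfl, update_update_eq_comp_swap m (Ne.symm hba)]
    · intro j _ hj; rw [if_neg (Ne.symm hj)]
    · intro h; exact absurd (Finset.mem_univ _) h
  · intro i _ hi
    simp [Ne.symm hi]
  · intro h; exact absurd (Finset.mem_univ _) h

lemma gaudin_apply {n N : ℕ} (z : Fin n → ℂ) (a : Fin n) (v : (Fin n → Fin N) → ℂ)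
    (m : Fin n → Fin N) :
    gaudinH n N z a v m = ∑ b ∈ univ.erase a, v (m ∘ ⇑(Equiv.swap a b)) / (z a - z b) := by
  unfold gaudinH
  refine Finset.sum_congr rfl fun b hb => ?_
  rw [← omega_apply n N a b (Finset.ne_of_mem_erase hb) v m]
  simp only [← Finset.sum_div]

lemma sum_erase_comm {ι} [DecidableEq ι] (S : Finset ι) (f : ι → ι → ℂ) :
    ∑ c ∈ S, ∑ d ∈ S.erase c, f c d = ∑ c ∈ S, ∑ d ∈ S.erase c, f d c := by
  have h : ∀ g : ι → ι → ℂ, (∑ c ∈ S, ∑ d ∈ S.erase c, g c d)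
      = (∑ c ∈ S, ∑ d ∈ S, g c d) - ∑ c ∈ S, g c c := by
    intro g
    rw [← Finset.sum_sub_distrib]
    exact Finset.sum_congr rfl fun c hc => Finset.sum_erase_eq_sub hc
  rw [h, h (fun c d => f d c), Finset.sum_comm]

/-- The key three-point cancellation identity. -/
lemma group_identity {n N : ℕ} (v : (Fin n → Fin N) → ℂ) (m : Fin n → Fin N)
    (z : Fin n → ℂ) {a b c : Fin n}
    (hab : a ≠ b) (hac : a ≠ c) (hbc : b ≠ c)
    (hz : ∀ x y : Fin n, x ≠ y → z x - z y ≠ 0) :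
    v (m ∘ (⇑(Equiv.swap a b) ∘ ⇑(Equiv.swap b c))) / ((z b - z c) * (z a - z b))
      + v (m ∘ (⇑(Equiv.swap a c) ∘ ⇑(Equiv.swap b a))) / ((z b - z a) * (z a - z c))
      + v (m ∘ (⇑(Equiv.swap a c) ∘ ⇑(Equiv.swap b c))) / ((z b - z c) * (z a - z c))
    = v (m ∘ (⇑(Equiv.swap b a) ∘ ⇑(Equiv.swap a c))) / ((z a - z c) * (z b - z a))
      + v (m ∘ (⇑(Equiv.swap b c) ∘ ⇑(Equiv.swap a b))) / ((z a - z b) * (z b - z c))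
      + v (m ∘ (⇑(Equiv.swap b c) ∘ ⇑(Equiv.swap a c))) / ((z a - z c) * (z b - z c)) := by
  have h1 : ⇑(Equiv.swap a b) ∘ ⇑(Equiv.swap b c) = ⇑(Equiv.swap b c) ∘ ⇑(Equiv.swap a c) :=
    swap_comp_aux hab hbc hac
  have h3 : ⇑(Equiv.swap b a) ∘ ⇑(Equiv.swap a c) = ⇑(Equiv.swap a c) ∘ ⇑(Equiv.swap b c) :=
    swap_comp_aux (Ne.symm hab) hac hbc
  have h2 : ⇑(Equiv.swap a c) ∘ ⇑(Equiv.swap b a) = ⇑(Equiv.swap b c) ∘ ⇑(Equiv.swap a c) := by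
    rw [Equiv.swap_comm a c, Equiv.swap_comm b a,
      swap_comp_aux (Ne.symm hac) hab (Ne.symm hbc), Equiv.swap_comm c b, h1,
      Equiv.swap_comm c a]
  have h4 : ⇑(Equiv.swap b c) ∘ ⇑(Equiv.swap a b) = ⇑(Equiv.swap a c) ∘ ⇑(Equiv.swap b c) := by
    rw [Equiv.swap_comm b c, Equiv.swap_comm a b,
      swap_comp_aux (Ne.symm hbc) (Ne.symm hab) (Ne.symm hac), Equiv.swap_comm c a, h3,
      Equiv.swap_comm c b]
  rw [h1, h2, h3, h4]
  have p := hz a b hab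
  have q := hz a c hac
  have r := hz b c hbc
  have p' := hz b a (Ne.symm hab)
  field_simp
  ring

/-- the Gaudin Hamiltonians pairwise commute. -/
theorem gaudin_hamiltonians_commute (n N : ℕ) (z : Fin n → ℂ)
    (hz : Function.Injective z) (a b : Fin n) (v : (Fin n → Fin N) → ℂ) :
    gaudinH n N z a (gaudinH n N z b v) = gaudinH n N z b (gaudinH n N z a v) := by
  rcases eq_or_ne a b with rfl | hab
  · rfl
  funext m
  have hzz : ∀ x y : Fin n, x ≠ y → z x - z y ≠ 0 :=
    fun x y h => sub_ne_zero_of_ne (fun e => h (hz e))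
  simp only [gaudin_apply, Finset.sum_div, div_div, Function.comp_assoc]
  set S := ((univ : Finset (Fin n)).erase a).erase b with hS
  have hbA : b ∈ (univ : Finset (Fin n)).erase a := Finset.mem_erase.2 ⟨Ne.symm hab, mem_univ b⟩
  have haB : a ∈ (univ : Finset (Fin n)).erase b := Finset.mem_erase.2 ⟨hab, mem_univ a⟩
  have h1 : (univ : Finset (Fin n)).erase a = insert b S := (Finset.insert_erase hbA).symm
  have h2 : (univ : Finset (Fin n)).erase b = insert a S := by
    rw [hS, Finset.erase_right_comm]; exact (Finset.insert_erase haB).symm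
  have haS : a ∉ S := fun h => (Finset.mem_erase.1 (Finset.mem_of_mem_erase h)).1 rfl
  have hbS : b ∉ S := Finset.notMem_erase _ _
  have hcS : ∀ c ∈ S, c ≠ a ∧ c ≠ b := fun c hc =>
    ⟨(Finset.mem_erase.1 (Finset.mem_of_mem_erase hc)).1, (Finset.mem_erase.1 hc).1⟩
  rw [h1, h2]
  simp only [Finset.sum_insert haS, Finset.sum_insert hbS, Finset.sum_add_distrib]
  -- abbreviations for the two kinds of summands
  have splitd : ∀ f : Fin n → Fin n → ℂ,
      (∑ c ∈ S, ∑ d ∈ S, f c d) = (∑ c ∈ S, f c c) + ∑ c ∈ S, ∑ d ∈ S.erase c, f c d := by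
    intro f
    rw [← Finset.sum_add_distrib]
    exact Finset.sum_congr rfl fun c hc => (Finset.add_sum_erase S (f c) hc).symm
  rw [splitd, splitd]
  have eA : v (m ∘ ⇑(Equiv.swap a b) ∘ ⇑(Equiv.swap b a)) / ((z b - z a) * (z a - z b))
      = v (m ∘ ⇑(Equiv.swap b a) ∘ ⇑(Equiv.swap a b)) / ((z a - z b) * (z b - z a)) := by
    rw [Equiv.swap_comm a b, mul_comm]
  have eB : (∑ x ∈ S, v (m ∘ ⇑(Equiv.swap a b) ∘ ⇑(Equiv.swap b x)) / ((z b - z x) * (z a - z b)))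
        + (∑ x ∈ S, v (m ∘ ⇑(Equiv.swap a x) ∘ ⇑(Equiv.swap b a)) / ((z b - z a) * (z a - z x)))
        + (∑ x ∈ S, v (m ∘ ⇑(Equiv.swap a x) ∘ ⇑(Equiv.swap b x)) / ((z b - z x) * (z a - z x)))
      = (∑ x ∈ S, v (m ∘ ⇑(Equiv.swap b a) ∘ ⇑(Equiv.swap a x)) / ((z a - z x) * (z b - z a)))
        + (∑ x ∈ S, v (m ∘ ⇑(Equiv.swap b x) ∘ ⇑(Equiv.swap a b)) / ((z a - z b) * (z b - z x)))
        + (∑ x ∈ S, v (m ∘ ⇑(Equiv.swap b x) ∘ ⇑(Equiv.swap a x)) / ((z a - z x) * (z b - z x))) := by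
    rw [← Finset.sum_add_distrib, ← Finset.sum_add_distrib,
      ← Finset.sum_add_distrib, ← Finset.sum_add_distrib]
    refine Finset.sum_congr rfl fun c hc => ?_
    obtain ⟨hca, hcb⟩ := hcS c hc
    exact group_identity v m z hab (Ne.symm hca) (Ne.symm hcb) hzz
  have eC : (∑ c ∈ S, ∑ d ∈ S.erase c,
        v (m ∘ ⇑(Equiv.swap a c) ∘ ⇑(Equiv.swap b d)) / ((z b - z d) * (z a - z c)))
      = ∑ c ∈ S, ∑ d ∈ S.erase c,
        v (m ∘ ⇑(Equiv.swap b c) ∘ ⇑(Equiv.swap a d)) / ((z a - z d) * (z b - z c)) := by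
    have step : (∑ c ∈ S, ∑ d ∈ S.erase c,
        v (m ∘ ⇑(Equiv.swap a c) ∘ ⇑(Equiv.swap b d)) / ((z b - z d) * (z a - z c)))
        = ∑ c ∈ S, ∑ d ∈ S.erase c,
          v (m ∘ ⇑(Equiv.swap b d) ∘ ⇑(Equiv.swap a c)) / ((z a - z c) * (z b - z d)) := by
      refine Finset.sum_congr rfl fun c hc => Finset.sum_congr rfl fun d hd => ?_
      obtain ⟨hca, hcb⟩ := hcS c hc
      obtain ⟨hda, hdb⟩ := hcS d (Finset.mem_of_mem_erase hd)
      have hdc : d ≠ c := (Finset.mem_erase.1 hd).1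
      rw [show ⇑(Equiv.swap a c) ∘ ⇑(Equiv.swap b d) = ⇑(Equiv.swap b d) ∘ ⇑(Equiv.swap a c)
          from swap_comp_disjoint hab (Ne.symm hda) hcb (Ne.symm hdc), mul_comm]
    rw [step]
    exact (sum_erase_comm S (fun c d =>
      v (m ∘ ⇑(Equiv.swap b c) ∘ ⇑(Equiv.swap a d)) / ((z a - z d) * (z b - z c)))).symm
  linear_combination eA + eB + eC
end
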